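/- arXiv:2509.17738 — 3 statements merged into one kernel-verified Lean document; each statement's English description precedes it below -/
import Mathlib

section
/- Let H be a symmetric positive semidefinite matrix of size (d·m)×(d·m), viewed as a d×d array of m×m blocks H_{s,s'}, and let w ∈ ℝ^{d×m} be a matrix with rows w_1,…,w_d ∈ ℝ^m. Then ∑_{s,s'=1}^d ⟨w_s, w_{s'}⟩ · Tr(H_{s,s'}) ≤ ‖w‖_F² · Tr(H), where ‖w‖_F² = ∑_{s=1}^d ‖w_s‖² is the squared Frobenius norm and Tr(H) = ∑_{s=1}^d Tr(H_{s,s}). -/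
/-!
Write `xᵢ` for the `i`-th column of `w` and `H⁽ʲ⁾` for the `d × d` matrix
`(s, s') ↦ H (s, j) (s', j)`. Expanding the traces, the left-hand side is
`∑ᵢ ∑ⱼ xᵢᵀ H⁽ʲ⁾ xᵢ`. Each `H⁽ʲ⁾` is a principal submatrix of `H`, hence positive semidefinite,
and a positive semidefinite `A = BᵀB` satisfies `xᵀ A x = ‖B x‖² ≤ ‖B‖_F² ‖x‖² = Tr A ‖x‖²`
by Cauchy–Schwarz applied to each row of `B`. Summing, and using `∑ⱼ Tr H⁽ʲ⁾ = Tr H`, gives the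
claim.
-/

open Matrix

namespace Matrix

theorem dotProduct_sq_le_dotProduct_self_mul_dotProduct_self {n : Type*} [Fintype n]
    (u v : n → ℝ) : (u ⬝ᵥ v) ^ 2 ≤ (u ⬝ᵥ u) * (v ⬝ᵥ v) := by
  simpa only [dotProduct, sq] using Finset.sum_mul_sq_le_sq_mul_sq Finset.univ u v

open scoped MatrixOrder in
theorem PosSemidef.dotProduct_mulVec_le_dotProduct_self_mul_trace {n : Type*} [Fintype n]
    {A : Matrix n n ℝ} (hA : A.PosSemidef) (x : n → ℝ) :
    x ⬝ᵥ (A *ᵥ x) ≤ (x ⬝ᵥ x) * A.trace := by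
  classical
  obtain ⟨B, rfl⟩ := CStarAlgebra.nonneg_iff_eq_star_mul_self.mp hA.nonneg
  rw [star_eq_conjTranspose, conjTranspose_eq_transpose_of_trivial]
  have hquad : x ⬝ᵥ ((Bᵀ * B) *ᵥ x) = ∑ k, (B k ⬝ᵥ x) ^ 2 := by
    rw [← mulVec_mulVec, dotProduct_mulVec, vecMul_transpose]
    simp only [dotProduct, mulVec, sq]
  have htrace : (Bᵀ * B).trace = ∑ k, B k ⬝ᵥ B k := by
    rw [← trace_transpose_mul]
    simp only [trace, diag, mul_apply, transpose_transpose, transpose_apply, dotProduct]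
  rw [hquad, htrace, Finset.mul_sum]
  gcongr with k
  rw [mul_comm]
  exact dotProduct_sq_le_dotProduct_self_mul_dotProduct_self _ _

variable {ι κ R : Type*} [Fintype ι] [Fintype κ]

theorem trace_eq_sum_trace_submatrix_prodMk [AddCommMonoid R]
    (H : Matrix (ι × κ) (ι × κ) R) :
    H.trace = ∑ j, (H.submatrix (·, j) (·, j)).trace := by
  simp only [trace, diag, submatrix_apply, Fintype.sum_prod_type_right]

theorem sum_rowDot_mul_trace_block_eq_sum_dotProduct_mulVec {ν : Type*} [Fintype ν]
    [CommSemiring R] (H : Matrix (ι × κ) (ι × κ) R) (w : Matrix ι ν R) :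
    ∑ s, ∑ s', (∑ i, w s i * w s' i) * trace (of fun j j' : κ => H (s, j) (s', j')) =
      ∑ j, ∑ i, wᵀ i ⬝ᵥ (H.submatrix (·, j) (·, j) *ᵥ wᵀ i) := by
  simp only [trace, diag, of_apply, dotProduct, mulVec, submatrix_apply, transpose_apply,
    Finset.mul_sum, Finset.sum_mul]
  simp_rw [Finset.sum_comm (α := ν), Finset.sum_comm (α := κ)]
  ac_rfl

end Matrix

/-- Lemma 2 of the paper: for a symmetric positive semidefinite matrix `H` of size
`(d*m) × (d*m)` viewed as a `d × d` array of `m × m` blocks `H_{s,s'}`, and a weight matrix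
`w ∈ ℝ^{d×m}` with rows `w_s`, the relative flatness measure
`κ = ∑_{s,s'} ⟨w_s, w_{s'}⟩ ⋅ Tr(H_{s,s'})` is bounded by `‖w‖_F² ⋅ Tr(H)`. -/
theorem relative_flatness_le_norm_trace (d m : ℕ)
    (H : Matrix (Fin d × Fin m) (Fin d × Fin m) ℝ)
    (hH : H.PosSemidef) (w : Matrix (Fin d) (Fin m) ℝ) :
    (∑ s : Fin d, ∑ s' : Fin d,
        (∑ i : Fin m, w s i * w s' i) *
          Matrix.trace (Matrix.of fun i j : Fin m => H (s, i) (s', j))) ≤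
      (∑ s : Fin d, ∑ i : Fin m, w s i ^ 2) * Matrix.trace H := by
  have hnorm : ∑ s, ∑ i, w s i ^ 2 = ∑ i, wᵀ i ⬝ᵥ wᵀ i := by
    simp only [dotProduct, transpose_apply, sq]
    exact Finset.sum_comm
  calc _ = ∑ j, ∑ i, wᵀ i ⬝ᵥ (H.submatrix (·, j) (·, j) *ᵥ wᵀ i) :=
        sum_rowDot_mul_trace_block_eq_sum_dotProduct_mulVec H w
    _ ≤ ∑ j, ∑ i, (wᵀ i ⬝ᵥ wᵀ i) * (H.submatrix (·, j) (·, j)).trace := by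
        gcongr with j _ i _
        exact (hH.submatrix _).dotProduct_mulVec_le_dotProduct_self_mul_trace _
    _ = _ := by
        rw [hnorm, trace_eq_sum_trace_submatrix_prodMk H, Finset.sum_mul_sum, Finset.sum_comm]
end

section
/- Let μ_1,…,μ_k ∈ ℝ^d be pairwise distinct, μ_g ∈ ℝ^d, M > 0 with ‖μ_j − μ_g‖ = M for all j, λ > 0, and b_1,…,b_k ∈ ℝ. Set w_j = λ(μ_j − μ_g). Suppose that for every h ∈ ℝ^d and all j, c ∈ {1,…,k}: w_jᵀh + b_j ≥ w_cᵀh + b_c if and only if ‖h − μ_j‖ ≤ ‖h − μ_c‖. Then there exists a constant d₀ ∈ ℝ such that b_j + λ(μ_j − μ_g)ᵀμ_g = d₀ for all j ∈ {1,…,k}. -/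
open scoped RealInnerProductSpace

/-- Lemma 1 ("constant rest") of the paper's appendix: under NC2 (equinorm), NC3
(`w_j = λ(μ_j − μ_g)`) and NC4 (the linear classifier agrees with the nearest-class-mean
rule for every feature `h`), the quantity `b_j + λ(μ_j − μ_g)ᵀμ_g` is constant in `j`. -/
theorem constant_rest (d k : ℕ)
    (μ : Fin k → EuclideanSpace ℝ (Fin d)) (μg : EuclideanSpace ℝ (Fin d))
    (M : ℝ) (hMpos : 0 < M)
    (hdist : ∀ j c : Fin k, j ≠ c → μ j ≠ μ c)
    (hM : ∀ j, ‖μ j - μg‖ = M)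
    (lam : ℝ) (hlam : 0 < lam)
    (b : Fin k → ℝ)
    (w : Fin k → EuclideanSpace ℝ (Fin d))
    (hw : ∀ j, w j = lam • (μ j - μg))
    (hNC4 : ∀ (h : EuclideanSpace ℝ (Fin d)) (j c : Fin k),
        ⟪w j, h⟫ + b j ≥ ⟪w c, h⟫ + b c ↔ ‖h - μ j‖ ≤ ‖h - μ c‖) :
    ∃ d₀ : ℝ, ∀ j : Fin k, b j + lam * ⟪μ j - μg, μg⟫ = d₀ := by
  rcases Nat.eq_zero_or_pos k with hk | hk
  · subst hk
    exact ⟨0, fun j => j.elim0⟩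
  · have j0 : Fin k := ⟨0, hk⟩
    refine ⟨b j0 + lam * ⟪μ j0 - μg, μg⟫, fun j => ?_⟩
    have hdistEq : ∀ a c : Fin k, ‖μg - μ a‖ ≤ ‖μg - μ c‖ := by
      intro a c
      rw [show μg - μ a = -(μ a - μg) by abel, show μg - μ c = -(μ c - μg) by abel,
        norm_neg, norm_neg, hM a, hM c]
    have h1 := (hNC4 μg j j0).mpr (hdistEq j j0)
    have h2 := (hNC4 μg j0 j).mpr (hdistEq j0 j)
    have heq : ⟪w j, μg⟫ + b j = ⟪w j0, μg⟫ + b j0 := le_antisymm h2 h1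
    have hwj : ∀ a : Fin k, ⟪w a, μg⟫ = lam * ⟪μ a - μg, μg⟫ := by
      intro a; rw [hw a, real_inner_smul_left]
    rw [hwj, hwj] at heq
    linarith
end

section
/- Fix k ≥ 2, M > 0, λ > 0, and set δ = M²·k/(k−1). Let p_c(λ) = 1/(1 + (k−1)·e^{−λδ}) and p_j(λ) = e^{−λδ}/(1 + (k−1)·e^{−λδ}) for j ≠ c. Define T(λ) = M² · ∑_{j=1}^k p_j(λ)(1 − p_j(λ)) and ‖w‖² = λ²·k·M². Then ‖w‖² · T(λ) ≤ λ²·k³·M⁴ · e^{−λ M² k/(k−1)} / (1 + (k−1)·e^{−λ M² k/(k−1)})². -/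
/-! With `E = e^{−λδ} ≤ 1` and `D = 1 + (k−1)E`, the true class has `p_c(1−p_c) = (k−1)E/D²`,
and each of the other classes has `p_j(1−p_j) = E(1+(k−2)E)/D² ≤ (k−1)E/D²`. Summing over the
`k` classes gives `∑ p_j(1−p_j) ≤ k(k−1)E/D² ≤ k²E/D²`, and multiplying by `λ²kM⁴` is the bound. -/

section SoftmaxVariance

variable {n E : ℝ}

lemma one_div_mul_one_sub_one_div (hD : 0 < 1 + n * E) :
    1 / (1 + n * E) * (1 - 1 / (1 + n * E)) = n * E / (1 + n * E) ^ 2 := by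
  field_simp
  ring

lemma div_mul_one_sub_div_le (hn : 1 ≤ n) (hE₀ : 0 ≤ E) (hE₁ : E ≤ 1) :
    E / (1 + n * E) * (1 - E / (1 + n * E)) ≤ n * E / (1 + n * E) ^ 2 := by
  have hD : 0 < 1 + n * E := by positivity
  have hrest : 1 + (n - 1) * E ≤ n := by
    nlinarith [mul_nonneg (sub_nonneg.2 hn) (sub_nonneg.2 hE₁)]
  calc E / (1 + n * E) * (1 - E / (1 + n * E)) = E * (1 + (n - 1) * E) / (1 + n * E) ^ 2 := by
        field_simp
        ring
    _ ≤ E * n / (1 + n * E) ^ 2 := by gcongr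
    _ = n * E / (1 + n * E) ^ 2 := by ring

lemma sum_mul_one_sub_le_of_uniform_gap {k : ℕ} (hk : 2 ≤ k) (c : Fin k) (hE₀ : 0 ≤ E)
    (hE₁ : E ≤ 1) (p : Fin k → ℝ)
    (hp : ∀ j, p j =
      if j = c then 1 / (1 + ((k : ℝ) - 1) * E) else E / (1 + ((k : ℝ) - 1) * E)) :
    ∑ j, p j * (1 - p j) ≤ (k : ℝ) ^ 2 * E / (1 + ((k : ℝ) - 1) * E) ^ 2 := by
  have hn : (1 : ℝ) ≤ (k : ℝ) - 1 := by
    have : (2 : ℝ) ≤ k := by exact_mod_cast hk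
    linarith
  have hterm : ∀ j, p j * (1 - p j) ≤ ((k : ℝ) - 1) * E / (1 + ((k : ℝ) - 1) * E) ^ 2 := by
    intro j
    rw [hp j]
    split_ifs
    · exact (one_div_mul_one_sub_one_div (by positivity)).le
    · exact div_mul_one_sub_div_le hn hE₀ hE₁
  calc ∑ j, p j * (1 - p j) ≤ ∑ _j : Fin k, ((k : ℝ) - 1) * E / (1 + ((k : ℝ) - 1) * E) ^ 2 :=
        Finset.sum_le_sum fun j _ => hterm j
    _ = (k : ℝ) * ((k : ℝ) - 1) * E / (1 + ((k : ℝ) - 1) * E) ^ 2 := by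
        rw [Finset.sum_const, Finset.card_univ, Fintype.card_fin, nsmul_eq_mul]
        ring
    _ ≤ (k : ℝ) ^ 2 * E / (1 + ((k : ℝ) - 1) * E) ^ 2 := by gcongr; nlinarith

end SoftmaxVariance

theorem nc_implies_relative_flatness_bound_general (k : ℕ) (hk : 2 ≤ k)
    (M lam : ℝ) (hlam : 0 < lam) (c : Fin k)
    (δ : ℝ) (hδ : δ = M ^ 2 * (k : ℝ) / ((k : ℝ) - 1))
    (p : Fin k → ℝ)
    (hp : ∀ j, p j = if j = c then
        1 / (1 + ((k : ℝ) - 1) * Real.exp (-(lam * δ)))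
      else
        Real.exp (-(lam * δ)) / (1 + ((k : ℝ) - 1) * Real.exp (-(lam * δ))))
    (T : ℝ) (hT : T = M ^ 2 * ∑ j : Fin k, p j * (1 - p j))
    (wsq : ℝ) (hwsq : wsq = lam ^ 2 * (k : ℝ) * M ^ 2) :
    wsq * T ≤
      lam ^ 2 * (k : ℝ) ^ 3 * M ^ 4 *
          Real.exp (-(lam * (M ^ 2 * (k : ℝ) / ((k : ℝ) - 1)))) /
        (1 + ((k : ℝ) - 1) * Real.exp (-(lam * (M ^ 2 * (k : ℝ) / ((k : ℝ) - 1))))) ^ 2 := by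
  have hδ₀ : 0 ≤ δ := by
    have : (1 : ℝ) ≤ k := by exact_mod_cast (by omega : 1 ≤ k)
    rw [hδ]
    exact div_nonneg (by positivity) (by linarith)
  have hE₁ : Real.exp (-(lam * δ)) ≤ 1 :=
    Real.exp_le_one_iff.2 (neg_nonpos.2 (mul_nonneg hlam.le hδ₀))
  have hsum := sum_mul_one_sub_le_of_uniform_gap hk c (Real.exp_pos _).le hE₁ p hp
  rw [hwsq, hT, ← hδ]
  calc lam ^ 2 * (k : ℝ) * M ^ 2 * (M ^ 2 * ∑ j : Fin k, p j * (1 - p j))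
      = lam ^ 2 * (k : ℝ) * M ^ 4 * ∑ j : Fin k, p j * (1 - p j) := by ring
    _ ≤ lam ^ 2 * (k : ℝ) * M ^ 4 *
          ((k : ℝ) ^ 2 * Real.exp (-(lam * δ)) / (1 + ((k : ℝ) - 1) * Real.exp (-(lam * δ))) ^ 2) := by
        gcongr
    _ = _ := by ring

/-- The quantitative content of Proposition 1: with `δ = M²k/(k−1)`, softmax probabilities
`p_c = 1/(1+(k−1)e^{−λδ})`, `p_j = e^{−λδ}/(1+(k−1)e^{−λδ})` for `j ≠ c`, Hessian-trace
factor `T = M² ∑_j p_j(1−p_j)` and squared weight norm `‖w‖² = λ²kM²`, one has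
`‖w‖² · T ≤ λ²k³M⁴ e^{−λM²k/(k−1)} / (1+(k−1)e^{−λM²k/(k−1)})²`. -/
theorem nc_implies_relative_flatness_bound (k : ℕ) (hk : 2 ≤ k)
    (M lam : ℝ) (hM : 0 < M) (hlam : 0 < lam) (c : Fin k)
    (δ : ℝ) (hδ : δ = M ^ 2 * (k : ℝ) / ((k : ℝ) - 1))
    (p : Fin k → ℝ)
    (hp : ∀ j, p j = if j = c then
        1 / (1 + ((k : ℝ) - 1) * Real.exp (-(lam * δ)))
      else
        Real.exp (-(lam * δ)) / (1 + ((k : ℝ) - 1) * Real.exp (-(lam * δ))))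
    (T : ℝ) (hT : T = M ^ 2 * ∑ j : Fin k, p j * (1 - p j))
    (wsq : ℝ) (hwsq : wsq = lam ^ 2 * (k : ℝ) * M ^ 2) :
    wsq * T ≤
      lam ^ 2 * (k : ℝ) ^ 3 * M ^ 4 *
          Real.exp (-(lam * (M ^ 2 * (k : ℝ) / ((k : ℝ) - 1)))) /
        (1 + ((k : ℝ) - 1) * Real.exp (-(lam * (M ^ 2 * (k : ℝ) / ((k : ℝ) - 1))))) ^ 2 :=
  nc_implies_relative_flatness_bound_general k hk M lam hlam c δ hδ p hp T hT wsq hwsq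
end
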